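/- arXiv:2202.07069 — 6 statements merged into one kernel-verified Lean document; each statement's English description precedes it below -/
import Mathlib

section
/- Let V be a commutative unital quantale, let (X,a) and (Y,b) be V-categories, let i : (X,a) → (Y,b) be an initial V-functor, and let f : (X,a) → (V,hom) be a V-functor. Then there exists a V-functor g : (Y,b) → (V,hom) such that g ∘ i = f. (The V-category (V,hom) is injective with respect to initial V-functors.) -/
universe u v w

open CategoryTheory

/-- `V` is a (commutative unital) quantale: the tensor distributes over suprema. -/
def QuantaleLaw (V : Type u) [CompleteLattice V] [CommMonoid V] : Prop :=
  ∀ (u : V) (s : Set V), u * sSup s = ⨆ v ∈ s, u * v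

/-- Internal hom of the quantale: `hom u w = ⨆ {v | u ⊗ v ≤ w}`. -/
def qhom {V : Type u} [CompleteLattice V] [CommMonoid V] (u w : V) : V :=
  sSup {v | u * v ≤ w}

/-- `a` is a `V`-category structure on `X`. -/
def IsVCat {V : Type u} [CompleteLattice V] [CommMonoid V] {X : Type v}
    (a : X → X → V) : Prop :=
  (∀ x, (1 : V) ≤ a x x) ∧ ∀ x y z, a x y * a y z ≤ a x z

/-- `f` is a `V`-functor from `(X,a)` to `(Y,b)`. -/
def IsVFunctor {V : Type u} [CompleteLattice V] {X : Type v} {Y : Type w}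
    (a : X → X → V) (b : Y → Y → V) (f : X → Y) : Prop :=
  ∀ x y, a x y ≤ b (f x) (f y)

/-- `f` is an initial `V`-functor from `(X,a)` to `(Y,b)`. -/
def IsInitialVFunctor {V : Type u} {X : Type v} {Y : Type w}
    (a : X → X → V) (b : Y → Y → V) (f : X → Y) : Prop :=
  ∀ x y, a x y = b (f x) (f y)

/-- The `V`-category structure of the power `V^κ`. -/
def powStr {V : Type u} [CompleteLattice V] [CommMonoid V] (κ : Type v)
    (p q : κ → V) : V :=
  ⨅ i, qhom (p i) (q i)

/-- The graph of a function, as a `V`-relation: `k` on the graph, `⊥` elsewhere. -/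
def fnGraph {V : Type u} [CompleteLattice V] [CommMonoid V] {X : Type v} {Y : Type w}
    (f : X → Y) : X → Y → V :=
  fun x y => ⨆ _ : f x = y, (1 : V)

/-- A lifting of a `Set`-functor `F` to `V`-Cat. -/
structure Lifting (V : Type u) [CompleteLattice V] [CommMonoid V]
    (F : Type u ⥤ Type u) where
  str : ∀ {X : Type u}, (X → X → V) → F.obj X → F.obj X → V
  isVCat : ∀ {X : Type u} (a : X → X → V), IsVCat a → IsVCat (str a)
  map : ∀ {X Y : Type u} (a : X → X → V) (b : Y → Y → V) (f : X → Y),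
    IsVCat a → IsVCat b → IsVFunctor a b f →
    IsVFunctor (str a) (str b) (F.map (TypeCat.ofHom f))

/-- A `κ`-ary `V`-valued predicate lifting for a `Set`-functor `F`. -/
structure PredLifting (V : Type u) [CompleteLattice V] [CommMonoid V]
    (F : Type u ⥤ Type u) (κ : Type u) where
  app : ∀ {X : Type u}, (X → κ → V) → F.obj X → V
  natural : ∀ {X Y : Type u} (f : X → Y) (p : Y → κ → V) (t : F.obj X),
    app (fun x => p (f x)) t = app p (F.map (TypeCat.ofHom f) t)

/-- A predicate lifting is monotone if it preserves the pointwise order of predicates. -/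
def PredLifting.Mono {V : Type u} [CompleteLattice V] [CommMonoid V]
    {F : Type u ⥤ Type u} {κ : Type u} (lam : PredLifting V F κ) : Prop :=
  ∀ (X : Type u) (p q : X → κ → V), (∀ x i, p x i ≤ q x i) →
    ∀ t, lam.app p t ≤ lam.app q t

/-- A predicate lifting is compatible with a lifting `L` if it lifts `V`-functorial
predicates to `V`-functorial predicates. -/
def Compatible {V : Type u} [CompleteLattice V] [CommMonoid V] {F : Type u ⥤ Type u}
    (L : Lifting V F) {κ : Type u} (lam : PredLifting V F κ) : Prop :=
  ∀ (X : Type u) (a : X → X → V), IsVCat a → ∀ f : X → κ → V,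
    IsVFunctor a (powStr κ) f → IsVFunctor (L.str a) qhom (lam.app f)

/-- The Kantorovich `V`-category structure on `F.obj X` induced by a family of
predicate liftings. -/
noncomputable def kantStr {V : Type u} [CompleteLattice V] [CommMonoid V]
    {F : Type u ⥤ Type u} {ι : Type v} {κ : ι → Type u}
    (Λ : ∀ l, PredLifting V F (κ l)) {X : Type u} (a : X → X → V)
    (t s : F.obj X) : V :=
  ⨅ l, ⨅ f : {f : X → κ l → V // IsVFunctor a (powStr (κ l)) f},
    qhom ((Λ l).app f.1 t) ((Λ l).app f.1 s)

/-- A generalized predicate lifting for `(F, L)` with parameter `V`-category `(A, α)`. -/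
structure GenPredLifting (V : Type u) [CompleteLattice V] [CommMonoid V]
    (F : Type u ⥤ Type u) (L : Lifting V F) (A : Type u) (α : A → A → V) where
  app : ∀ {Z : Type u}, (Z → Z → V) → (Z → A) → F.obj Z → V
  isVFunctor : ∀ {Z : Type u} (c : Z → Z → V), IsVCat c → ∀ f : Z → A,
    IsVFunctor c α f → IsVFunctor (L.str c) qhom (app c f)
  natural : ∀ {Z Z' : Type u} (c : Z → Z → V) (c' : Z' → Z' → V),
    IsVCat c → IsVCat c' → ∀ (u : Z → Z'), IsVFunctor c c' u →
    ∀ (g : Z' → A), IsVFunctor c' α g →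
    ∀ t : F.obj Z, app c (fun z => g (u z)) t = app c' g (F.map (TypeCat.ofHom u) t)

/-- A lax extension of a `Set`-functor `F` to `V`-Rel. -/
structure LaxExt (V : Type u) [CompleteLattice V] [CommMonoid V]
    (F : Type u ⥤ Type u) where
  ext : ∀ {X Y : Type u}, (X → Y → V) → F.obj X → F.obj Y → V
  mono : ∀ {X Y : Type u} (r r' : X → Y → V), (∀ x y, r x y ≤ r' x y) →
    ∀ t s, ext r t s ≤ ext r' t s
  comp : ∀ {X Y Z : Type u} (r : X → Y → V) (s : Y → Z → V)
    (t : F.obj X) (w : F.obj Z),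
    (⨆ u : F.obj Y, ext r t u * ext s u w) ≤
      ext (fun x z => ⨆ y, r x y * s y z) t w
  lax_map : ∀ {X Y : Type u} (f : X → Y) (t : F.obj X),
    (1 : V) ≤ ext (fnGraph f) t (F.map (TypeCat.ofHom f) t)
  lax_map_op : ∀ {X Y : Type u} (f : X → Y) (t : F.obj X),
    (1 : V) ≤ ext (fun y x => fnGraph f x y) (F.map (TypeCat.ofHom f) t) t

namespace QuantaleLaw

variable {V : Type u} [CompleteLattice V] [CommMonoid V] (hV : QuantaleLaw V)
include hV

theorem mul_iSup {ι : Sort*} (u : V) (s : ι → V) : u * ⨆ j, s j = ⨆ j, u * s j := by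
  rw [← sSup_range, hV u (Set.range s), iSup_range]

theorem mul_le_mul_left' {s t : V} (u : V) (hst : s ≤ t) : u * s ≤ u * t := by
  have h := hV.mul_iSup u fun b : Bool => cond b t s
  simp only [iSup_bool_eq, cond_true, cond_false, sup_eq_left.mpr hst] at h
  rw [h]
  exact le_sup_right

theorem le_qhom_iff {u v w : V} : v ≤ qhom u w ↔ u * v ≤ w := by
  refine ⟨fun hv => (hV.mul_le_mul_left' u hv).trans ?_, fun h => le_sSup h⟩
  rw [qhom, hV u]
  exact iSup₂_le fun _ h => h

theorem isVFunctor_qhom_iff {X : Type*} {a : X → X → V} {f : X → V} :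
    IsVFunctor a qhom f ↔ ∀ x y, f x * a x y ≤ f y :=
  forall₂_congr fun _ _ => hV.le_qhom_iff

end QuantaleLaw

/-- The left Kan extension of `f` along `i`. -/
def lan {V : Type u} [CompleteLattice V] [CommMonoid V] {X Y : Type*}
    (b : Y → Y → V) (i : X → Y) (f : X → V) (y : Y) : V :=
  ⨆ x, f x * b (i x) y

section Lan

variable {V : Type u} [CompleteLattice V] [CommMonoid V] (hV : QuantaleLaw V)
  {X Y : Type*} {b : Y → Y → V} {i : X → Y} {f : X → V}
include hV

theorem isVFunctor_lan (hb : IsVCat b) : IsVFunctor b qhom (lan b i f) := by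
  refine hV.isVFunctor_qhom_iff.mpr fun y y' => ?_
  rw [lan, mul_comm, hV.mul_iSup]
  refine iSup_mono fun x => ?_
  rw [mul_comm, mul_assoc]
  exact hV.mul_le_mul_left' _ (hb.2 _ _ _)

theorem lan_apply_le {a : X → X → V} (hi : IsInitialVFunctor a b i)
    (hf : IsVFunctor a qhom f) (x : X) : lan b i f (i x) ≤ f x :=
  iSup_le fun x' => hi x' x ▸ hV.isVFunctor_qhom_iff.mp hf x' x

theorem le_lan_apply (hb : IsVCat b) (x : X) : f x ≤ lan b i f (i x) :=
  calc f x = f x * 1 := (mul_one _).symm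
    _ ≤ f x * b (i x) (i x) := hV.mul_le_mul_left' _ (hb.1 _)
    _ ≤ lan b i f (i x) := le_iSup (fun x' => f x' * b (i x') (i x)) x

end Lan

theorem stmt_0_general {V : Type u} [CompleteLattice V] [CommMonoid V] (hV : QuantaleLaw V)
    {X Y : Type u} (a : X → X → V) (b : Y → Y → V)
    (hb : IsVCat b)
    (i : X → Y) (hi : IsInitialVFunctor a b i)
    (f : X → V) (hf : IsVFunctor a qhom f) :
    ∃ g : Y → V, IsVFunctor b qhom g ∧ ∀ x, g (i x) = f x :=
  ⟨lan b i f, isVFunctor_lan hV hb, fun x =>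
    (lan_apply_le hV hi hf x).antisymm (le_lan_apply hV hb x)⟩

/-- The `V`-category `(V, hom)` is injective w.r.t. initial `V`-functors. -/
theorem stmt_0 {V : Type u} [CompleteLattice V] [CommMonoid V] (hV : QuantaleLaw V)
    {X Y : Type u} (a : X → X → V) (b : Y → Y → V)
    (ha : IsVCat a) (hb : IsVCat b)
    (i : X → Y) (hi : IsInitialVFunctor a b i)
    (f : X → V) (hf : IsVFunctor a qhom f) :
    ∃ g : Y → V, IsVFunctor b qhom g ∧ ∀ x, g (i x) = f x :=
  stmt_0_general hV a b hb i hi f hf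
end

section
/- Let V be a commutative unital quantale and (X,a) a V-category. For all x,y ∈ X, a x y equals the infimum, over all V-functors f : (X,a) → (V,hom), of hom (f x) (f y). (The cone of all V-functors into (V,hom) is initial.) -/
universe u v w

open CategoryTheory

/-! The representable `a x` is itself a `V`-functor into `(V, hom)` (Yoneda), and it already
realises the infimum at `(x, y)`: `hom (a x x) (a x y) ≤ a x y` because `k ≤ a x x`. -/

theorem QuantaleLaw.mul_le_mul_left {V : Type u} [CompleteLattice V] [CommMonoid V]
    (hV : QuantaleLaw V) (u : V) {v w : V} (h : v ≤ w) : u * v ≤ u * w := by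
  have hsup : sSup {v, w} = w := by simpa using h
  calc u * v ≤ ⨆ t ∈ ({v, w} : Set V), u * t := le_biSup (u * ·) (Set.mem_insert v {w})
    _ = u * w := by rw [← hV, hsup]

theorem le_qhom_of_mul_le {V : Type u} [CompleteLattice V] [CommMonoid V] {u v w : V}
    (h : u * v ≤ w) : v ≤ qhom u w :=
  le_sSup h

theorem qhom_le_of_one_le {V : Type u} [CompleteLattice V] [CommMonoid V]
    (hV : QuantaleLaw V) {u : V} (hu : 1 ≤ u) (w : V) : qhom u w ≤ w :=
  sSup_le fun v (hv : u * v ≤ w) =>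
    calc v = 1 * v := (one_mul v).symm
      _ ≤ u * v := by simpa only [mul_comm _ v] using hV.mul_le_mul_left v hu
      _ ≤ w := hv

theorem IsVCat.isVFunctor_qhom_apply {V : Type u} [CompleteLattice V] [CommMonoid V]
    {X : Type v} {a : X → X → V} (ha : IsVCat a) (x : X) : IsVFunctor a qhom (a x) :=
  fun y z => le_qhom_of_mul_le (ha.2 x y z)

theorem le_iInf_qhom_of_isVFunctor {V : Type u} [CompleteLattice V] [CommMonoid V]
    {X : Type v} (a : X → X → V) (x y : X) :
    a x y ≤ ⨅ f : {f : X → V // IsVFunctor a qhom f}, qhom (f.1 x) (f.1 y) :=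
  le_iInf fun f => f.2 x y

/-- The cone of all `V`-functors into `(V, hom)` is initial. -/
theorem stmt_1 {V : Type u} [CompleteLattice V] [CommMonoid V] (hV : QuantaleLaw V)
    {X : Type u} (a : X → X → V) (ha : IsVCat a) (x y : X) :
    a x y = ⨅ f : {f : X → V // IsVFunctor a qhom f}, qhom (f.1 x) (f.1 y) :=
  le_antisymm (le_iInf_qhom_of_isVFunctor a x y) <|
    calc ⨅ f : {f : X → V // IsVFunctor a qhom f}, qhom (f.1 x) (f.1 y)
        ≤ qhom (a x x) (a x y) := iInf_le_of_le ⟨a x, ha.isVFunctor_qhom_apply x⟩ le_rfl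
      _ ≤ a x y := qhom_le_of_one_le hV (ha.1 x) (a x y)
end

section
/- Let V be a commutative unital quantale, F : Type u ⥤ Type u a functor, λ a monotone κ-ary predicate lifting for F, and (X,a) a V-category. For p : X → κ → V define (a⋆p) x i = ⨆_z (p z i ⊗ a z x). Then for all 𝔵,𝔶 ∈ F.obj X: ⨅_{p : X → κ → V} hom (λ_X p 𝔵) (λ_X (a⋆p) 𝔶) = ⨅_{p : X → κ → V with a⋆p ≤ p pointwise} hom (λ_X p 𝔵) (λ_X p 𝔶). -/
universe u v w

open CategoryTheory

/-! The infimum over all predicates is at most the one over distributors, because `a⋆p ≤ p`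
for a distributor `p` and `λ` is monotone. Conversely, every predicate `p` lies below the
distributor `a⋆p` (reflexivity of `a`), which is idempotent up to `≤` (transitivity of `a`);
as `hom` is antitone in its first argument, `a⋆p` witnesses the reverse inequality. -/

namespace QuantaleLaw

variable {V : Type u} [CompleteLattice V] [CommMonoid V]

lemma mul_iSup_s4 (hV : QuantaleLaw V) (u : V) {ι : Sort v} (f : ι → V) :
    u * ⨆ i, f i = ⨆ i, u * f i := by
  rw [iSup, hV u, iSup_range]

lemma iSup_mul (hV : QuantaleLaw V) {ι : Sort v} (f : ι → V) (u : V) :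
    (⨆ i, f i) * u = ⨆ i, f i * u := by
  simp only [mul_comm _ u, hV.mul_iSup_s4]

lemma mul_le_mul_left_s4 (hV : QuantaleLaw V) {v v' : V} (h : v ≤ v') (u : V) :
    u * v ≤ u * v' :=
  calc u * v ≤ ⨆ w ∈ ({v, v'} : Set V), u * w := le_biSup _ (Set.mem_insert v _)
    _ = u * v' := by rw [← hV u, sSup_pair, sup_eq_right.mpr h]

lemma qhom_anti_left (hV : QuantaleLaw V) {u u' w : V} (h : u' ≤ u) :
    qhom u w ≤ qhom u' w :=
  sSup_le_sSup fun v hv =>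
    calc u' * v = v * u' := mul_comm _ _
      _ ≤ v * u := hV.mul_le_mul_left_s4 h v
      _ = u * v := mul_comm _ _
      _ ≤ w := hv

end QuantaleLaw

section DistAct

variable {V : Type u} [CompleteLattice V] [CommMonoid V]

lemma qhom_mono_right {u w w' : V} (h : w ≤ w') : qhom u w ≤ qhom u w' :=
  sSup_le_sSup fun _ hv => le_trans hv h

variable {X : Type v} {κ : Type w}

/-- The action `a⋆p` of a `V`-relation on a `κ`-ary predicate; `p` is a distributor when
`a⋆p ≤ p`. -/
def distAct (a : X → X → V) (p : X → κ → V) : X → κ → V :=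
  fun x i => ⨆ z, p z i * a z x

lemma le_distAct (hV : QuantaleLaw V) {a : X → X → V} (hrefl : ∀ x, 1 ≤ a x x)
    (p : X → κ → V) (x : X) (i : κ) : p x i ≤ distAct a p x i :=
  calc p x i = p x i * 1 := (mul_one _).symm
    _ ≤ p x i * a x x := hV.mul_le_mul_left_s4 (hrefl x) _
    _ ≤ distAct a p x i := le_iSup (fun z => p z i * a z x) x

lemma distAct_distAct_le (hV : QuantaleLaw V) {a : X → X → V}
    (htrans : ∀ x y z, a x y * a y z ≤ a x z) (p : X → κ → V) (x : X) (i : κ) :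
    distAct a (distAct a p) x i ≤ distAct a p x i := by
  refine iSup_le fun z => ?_
  rw [distAct, hV.iSup_mul]
  refine iSup_le fun w => ?_
  calc p w i * a w z * a z x = p w i * (a w z * a z x) := mul_assoc _ _ _
    _ ≤ p w i * a w x := hV.mul_le_mul_left_s4 (htrans w z x) _
    _ ≤ distAct a p x i := le_iSup (fun z => p z i * a z x) w

end DistAct

/-- for a monotone predicate lifting, the infimum over all predicates of
`hom (λ p 𝔵) (λ (a⋆p) 𝔶)` equals the infimum over the `V`-distributors `p` (those with
`a⋆p ≤ p`) of `hom (λ p 𝔵) (λ p 𝔶)`. -/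
theorem stmt_4 {V : Type u} [CompleteLattice V] [CommMonoid V] (hV : QuantaleLaw V)
    {F : Type u ⥤ Type u} {κ : Type u} (lam : PredLifting V F κ) (hmono : lam.Mono)
    {X : Type u} (a : X → X → V) (ha : IsVCat a) (t s : F.obj X) :
    (⨅ p : X → κ → V,
        qhom (lam.app p t) (lam.app (fun x i => ⨆ z, p z i * a z x) s)) =
    ⨅ p : {p : X → κ → V // ∀ x i, (⨆ z, p z i * a z x) ≤ p x i},
        qhom (lam.app p.1 t) (lam.app p.1 s) := by
  apply le_antisymm
  · refine le_iInf fun p => (iInf_le _ p.1).trans ?_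
    exact qhom_mono_right (hmono X _ _ p.2 s)
  · refine le_iInf fun p => (iInf_le _ ⟨distAct a p, distAct_distAct_le hV ha.2 p⟩).trans ?_
    exact hV.qhom_anti_left (hmono X _ _ (le_distAct hV ha.1 p) t)
end

section
/- Let V be a commutative unital quantale, F : Type u ⥤ Type u a functor, L a lifting of F to V-Cat, and S a family of predicate liftings for F (λ ∈ S of arity κ_λ : Type u). Then every λ ∈ S is compatible with L if and only if for every V-category (X,a) and all 𝔵,𝔶 ∈ F.obj X, L a 𝔵 𝔶 ≤ F^S a 𝔵 𝔶. (This is the Galois-connection property making the Kantorovich lifting a right adjoint to the assignment of compatible predicate liftings.) -/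
universe u v w

open CategoryTheory

theorem le_kantStr_iff {V : Type u} [CompleteLattice V] [CommMonoid V]
    {F : Type u ⥤ Type u} {ι : Type v} {κ : ι → Type u}
    (Λ : ∀ l, PredLifting V F (κ l)) {X : Type u} (a : X → X → V) (t s : F.obj X) (x : V) :
    x ≤ kantStr Λ a t s ↔ ∀ l (f : X → κ l → V), IsVFunctor a (powStr (κ l)) f →
      x ≤ qhom ((Λ l).app f t) ((Λ l).app f s) := by
  simp only [kantStr, le_iInf_iff, Subtype.forall]

theorem stmt_9_general {V : Type u} [CompleteLattice V] [CommMonoid V]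
    {F : Type u ⥤ Type u} (L : Lifting V F)
    {ι : Type v} {κ : ι → Type u} (S : ∀ l, PredLifting V F (κ l)) :
    (∀ l, Compatible L (S l)) ↔
      ∀ (X : Type u) (a : X → X → V), IsVCat a → ∀ t s : F.obj X,
        L.str a t s ≤ kantStr S a t s := by
  constructor
  · intro hcompat X a ha t s
    exact (le_kantStr_iff S a t s _).2 fun l f hf => hcompat l X a ha f hf t s
  · intro hle l X a ha f hf t s
    exact (le_kantStr_iff S a t s _).1 (hle X a ha t s) l f hf

/-- the Galois-connection property of the Kantorovich lifting: every member
of `S` is compatible with `L` iff `L ≤ F^S` pointwise. -/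
theorem stmt_9 {V : Type u} [CompleteLattice V] [CommMonoid V] (hV : QuantaleLaw V)
    {F : Type u ⥤ Type u} (L : Lifting V F)
    {ι : Type v} {κ : ι → Type u} (S : ∀ l, PredLifting V F (κ l)) :
    (∀ l, Compatible L (S l)) ↔
      ∀ (X : Type u) (a : X → X → V), IsVCat a → ∀ t s : F.obj X,
        L.str a t s ≤ kantStr S a t s :=
  stmt_9_general L S
end

section
/- Let V be a commutative unital quantale, F : Type u ⥤ Type u a functor, and L a lifting of F to V-Cat. Let (λ_j)_{j∈J} be a family of generalized predicate liftings for (F,L) with parameter V-categories (A_j,α_j), and suppose each (A_j,α_j) is injective with respect to initial V-functors: for every initial V-functor i : (X,a) → (Y,b) and every V-functor f : (X,a) → (A_j,α_j) there is a V-functor g : (Y,b) → (A_j,α_j) with g ∘ i = f. Define T a 𝔵 𝔶 = ⨅_{j∈J} ⨅_{f : (X,a) → (A_j,α_j) V-functor} hom (λ_j(f) 𝔵) (λ_j(f) 𝔶). Then T preserves initial morphisms: if i : (X,a) → (Y,b) is an initial V-functor, then T a 𝔵 𝔶 = T b (F.map i 𝔵) (F.map i 𝔶) for all 𝔵,𝔶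 ∈ F.obj X. -/
universe u v w

open CategoryTheory

/- Every `V`-functor `(X,a) → (A,α)` extends along the initial `i` by injectivity of `(A,α)`, and
by naturality `λ(g ∘ i) = λ(g) ∘ F i`. Hence the predicates `λ(f)` on `F X` are exactly the
restrictions `λ(g) ∘ F i` of the predicates on `F Y`, and the two Kantorovich infima range over
the same values. -/

theorem iInf_comp_eq_of_range_eq {α β : Type*} {ι ι' : Sort*} [CompleteLattice α] {f : ι → β}
    {g : ι' → β} (h : Set.range f = Set.range g) (φ : β → α) :
    ⨅ i, φ (f i) = ⨅ j, φ (g j) := by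
  rw [← iInf_range' φ f, h, iInf_range']

section

variable {V : Type u} [CompleteLattice V]

theorem IsVFunctor.comp {X Y Z : Type*} {a : X → X → V} {b : Y → Y → V} {c : Z → Z → V}
    {g : Y → Z} {f : X → Y} (hg : IsVFunctor b c g) (hf : IsVFunctor a b f) :
    IsVFunctor a c (g ∘ f) :=
  fun x y => (hf x y).trans (hg (f x) (f y))

theorem IsInitialVFunctor.isVFunctor {X Y : Type*} {a : X → X → V} {b : Y → Y → V}
    {f : X → Y} (hf : IsInitialVFunctor a b f) : IsVFunctor a b f :=
  fun x y => (hf x y).le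

theorem GenPredLifting.range_app_eq_of_isInitialVFunctor [CommMonoid V] {F : Type u ⥤ Type u}
    {L : Lifting V F} {A : Type u} {α : A → A → V} (lam : GenPredLifting V F L A α)
    {X Y : Type u} {a : X → X → V} {b : Y → Y → V} (ha : IsVCat a) (hb : IsVCat b)
    {i : X → Y} (hi : IsInitialVFunctor a b i)
    (hext : ∀ f : X → A, IsVFunctor a α f → ∃ g : Y → A, IsVFunctor b α g ∧ ∀ x, g (i x) = f x) :
    Set.range (fun f : {f : X → A // IsVFunctor a α f} => lam.app a f.1) =
      Set.range (fun g : {g : Y → A // IsVFunctor b α g} =>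
        lam.app b g.1 ∘ F.map (TypeCat.ofHom i)) := by
  have restrict (g : Y → A) (hg : IsVFunctor b α g) :
      lam.app a (g ∘ i) = lam.app b g ∘ F.map (TypeCat.ofHom i) :=
    funext (lam.natural a b ha hb i hi.isVFunctor g hg)
  ext p
  constructor
  · rintro ⟨⟨f, hf⟩, rfl⟩
    obtain ⟨g, hg, hgi⟩ := hext f hf
    obtain rfl : g ∘ i = f := funext hgi
    exact ⟨⟨g, hg⟩, (restrict g hg).symm⟩
  · rintro ⟨⟨g, hg⟩, rfl⟩
    exact ⟨⟨g ∘ i, hg.comp hi.isVFunctor⟩, restrict g hg⟩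

end

theorem stmt_11_general {V : Type u} [CompleteLattice V] [CommMonoid V]
    {F : Type u ⥤ Type u} (L : Lifting V F)
    {J : Type v} (A : J → Type u) (α : ∀ j, A j → A j → V)
    (Λ : ∀ j, GenPredLifting V F L (A j) (α j))
    (hinj : ∀ (j : J) {X Y : Type u} (a : X → X → V) (b : Y → Y → V),
      IsVCat a → IsVCat b → ∀ i : X → Y, IsInitialVFunctor a b i →
      ∀ f : X → A j, IsVFunctor a (α j) f →
        ∃ g : Y → A j, IsVFunctor b (α j) g ∧ ∀ x, g (i x) = f x)
    {X Y : Type u} (a : X → X → V) (b : Y → Y → V) (ha : IsVCat a) (hb : IsVCat b)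
    (i : X → Y) (hi : IsInitialVFunctor a b i) (t s : F.obj X) :
    (⨅ j, ⨅ f : {f : X → A j // IsVFunctor a (α j) f},
        qhom ((Λ j).app a f.1 t) ((Λ j).app a f.1 s)) =
    ⨅ j, ⨅ g : {g : Y → A j // IsVFunctor b (α j) g},
        qhom ((Λ j).app b g.1 (F.map (TypeCat.ofHom i) t)) ((Λ j).app b g.1 (F.map (TypeCat.ofHom i) s)) := by
  exact iInf_congr fun j => iInf_comp_eq_of_range_eq
    ((Λ j).range_app_eq_of_isInitialVFunctor ha hb hi (hinj j a b ha hb i hi))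
    (fun p : F.obj X → V => qhom (p t) (p s))

/-- a topological lifting w.r.t. generalized predicate liftings whose
parameter `V`-categories are injective w.r.t. initial `V`-functors preserves initial
morphisms. -/
theorem stmt_11 {V : Type u} [CompleteLattice V] [CommMonoid V] (hV : QuantaleLaw V)
    {F : Type u ⥤ Type u} (L : Lifting V F)
    {J : Type v} (A : J → Type u) (α : ∀ j, A j → A j → V) (hα : ∀ j, IsVCat (α j))
    (Λ : ∀ j, GenPredLifting V F L (A j) (α j))
    (hinj : ∀ (j : J) {X Y : Type u} (a : X → X → V) (b : Y → Y → V),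
      IsVCat a → IsVCat b → ∀ i : X → Y, IsInitialVFunctor a b i →
      ∀ f : X → A j, IsVFunctor a (α j) f →
        ∃ g : Y → A j, IsVFunctor b (α j) g ∧ ∀ x, g (i x) = f x)
    {X Y : Type u} (a : X → X → V) (b : Y → Y → V) (ha : IsVCat a) (hb : IsVCat b)
    (i : X → Y) (hi : IsInitialVFunctor a b i) (t s : F.obj X) :
    (⨅ j, ⨅ f : {f : X → A j // IsVFunctor a (α j) f},
        qhom ((Λ j).app a f.1 t) ((Λ j).app a f.1 s)) =
    ⨅ j, ⨅ g : {g : Y → A j // IsVFunctor b (α j) g},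
        qhom ((Λ j).app b g.1 (F.map (TypeCat.ofHom i) t)) ((Λ j).app b g.1 (F.map (TypeCat.ofHom i) s)) :=
  stmt_11_general L A α Λ hinj a b ha hb i hi t s
end

section
/- Let V be a commutative unital quantale, F : Type u ⥤ Type u a functor, and L a lifting of F to V-Cat. There exists a lax extension E of F to V-Rel such that E a = L a (as V-category structures on F.obj X) for every V-category (X,a), if and only if L preserves initial morphisms and L is locally monotone, i.e. for all V-functors f, g : (X,a) → (Y,b) such that k ≤ b (f x) (g x) for all x ∈ X, also k ≤ L b (F.map f 𝔵) (F.map g 𝔵) for all 𝔵 ∈ F.obj X. -/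
universe u v w

open CategoryTheory

/-!
A lax extension `E` satisfies `E (g° · r · f) = (F g)° · E r · F f`, since `E f_*` and `E f_*°`
are lax units and counits for `F f`. Taking `r = b` and `f = g` an initial `V`-functor gives
`E a = (F f)° · E b · F f`; and `1_X ≤ g° · b · f` yields local monotonicity.

Conversely, let `E r 𝔵 𝔶` be the `L`-distance from `F inl 𝔵` to `F inr 𝔶` in the collage of `r`
over the discrete `V`-categories on `X` and `Y`. Each axiom follows by mapping collages into a
larger collage: gluing the collages of `r` and `s` along `Y` (initiality gives `E (s · r)` there,
functoriality of `L` the two factors), or using local monotonicity for the pair `inl`, `inr ∘ f`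
on the discrete `X`. For a `V`-category `(X, a)`, placing `(X, a)` between two discrete copies
of `X` shows `L a ≤ E a`, and folding the collage onto `(X, a)` shows `E a ≤ L a`.
-/

theorem QuantaleLaw.isQuantale {V : Type u} [CompleteLattice V] [CommMonoid V]
    (hV : QuantaleLaw V) : IsQuantale V where
  mul_sSup_distrib := hV
  sSup_mul_distrib s y := by simpa only [mul_comm _ y] using hV y s

lemma map_ofHom_id_apply (F : Type u ⥤ Type u) {X : Type u} (t : F.obj X) :
    F.map (TypeCat.ofHom (fun x => x : X → X)) t = t :=
  F.map_id_apply X t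

lemma map_ofHom_map_ofHom_apply (F : Type u ⥤ Type u) {X Y Z : Type u} (f : X → Y)
    (g : Y → Z) (t : F.obj X) :
    F.map (TypeCat.ofHom g) (F.map (TypeCat.ofHom f) t) =
      F.map (TypeCat.ofHom (fun x => g (f x))) t :=
  (F.map_comp_apply (TypeCat.ofHom f) (TypeCat.ofHom g) t).symm

section Relations

variable {V : Type u} [CompleteLattice V] [CommMonoid V] {X : Type v} {Y : Type w}

lemma one_le_fnGraph_apply (f : X → Y) (x : X) : (1 : V) ≤ fnGraph f x (f x) :=
  le_iSup_of_le rfl le_rfl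

lemma fnGraph_le {f : X → Y} {r : X → Y → V} (h : ∀ x, 1 ≤ r x (f x)) (x : X) (y : Y) :
    fnGraph f x y ≤ r x y :=
  iSup_le fun e => e ▸ h x

lemma isVFunctor_fnGraph_id {b : Y → Y → V} (hb : ∀ y, 1 ≤ b y y) (f : X → Y) :
    IsVFunctor (fnGraph id) b f :=
  fun _ _ => iSup_le fun e => e ▸ hb _

variable [IsQuantale V]

lemma fnGraph_mul_le {f : X → Y} {x : X} {y : Y} {v w : V} (h : f x = y → v ≤ w) :
    fnGraph f x y * v ≤ w := by
  by_cases e : f x = y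
  · rw [fnGraph, iSup_pos e, one_mul]
    exact h e
  · rw [fnGraph, iSup_neg e, Quantale.bot_mul]
    exact bot_le

lemma mul_fnGraph_le {f : X → Y} {x : X} {y : Y} {v w : V} (h : f x = y → v ≤ w) :
    v * fnGraph f x y ≤ w := by
  rw [mul_comm]
  exact fnGraph_mul_le h

lemma isVCat_fnGraph_id : IsVCat (fnGraph id : X → X → V) :=
  ⟨one_le_fnGraph_apply id, fun _ _ _ => fnGraph_mul_le fun e => e ▸ le_rfl⟩

lemma IsVCat.le_of_one_le {c : X → X → V} (hc : IsVCat c) {x x' y y' : X} (hx : 1 ≤ c x x')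
    (hy : 1 ≤ c y y') : c x' y ≤ c x y' :=
  calc c x' y = 1 * c x' y * 1 := by rw [one_mul, mul_one]
    _ ≤ c x x' * c x' y * c y y' := by gcongr
    _ ≤ c x y * c y y' := mul_le_mul_left (hc.2 x x' y) _
    _ ≤ c x y' := hc.2 x y y'

end Relations

section Collage

variable {V : Type u} [CompleteLattice V] [CommMonoid V] {X : Type v} {Y : Type w}

def collage (a : X → X → V) (b : Y → Y → V) (r : X → Y → V) : X ⊕ Y → X ⊕ Y → V
  | .inl x, .inl x' => a x x'
  | .inl x, .inr y => r x y
  | .inr _, .inl _ => ⊥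
  | .inr y, .inr y' => b y y'

lemma isVCat_collage [IsQuantale V] {a : X → X → V} {b : Y → Y → V} {r : X → Y → V}
    (ha : IsVCat a) (hb : IsVCat b) (hl : ∀ x x' y, a x x' * r x' y ≤ r x y)
    (hr : ∀ x y y', r x y * b y y' ≤ r x y') : IsVCat (collage a b r) := by
  refine ⟨?_, ?_⟩
  · rintro (x | y)
    exacts [ha.1 x, hb.1 y]
  · rintro (x | y) (x' | y') (x'' | y'') <;>
      simp only [collage, Quantale.bot_mul, Quantale.mul_bot, bot_le]
    exacts [ha.2 _ _ _, hl _ _ _, hr _ _ _, hb.2 _ _ _]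

abbrev discreteCollage (r : X → Y → V) : X ⊕ Y → X ⊕ Y → V :=
  collage (fnGraph id) (fnGraph id) r

lemma isVCat_discreteCollage [IsQuantale V] (r : X → Y → V) :
    IsVCat (discreteCollage r) :=
  isVCat_collage isVCat_fnGraph_id isVCat_fnGraph_id
    (fun _ _ _ => fnGraph_mul_le fun e => e ▸ le_rfl)
    (fun _ _ _ => mul_fnGraph_le fun e => e ▸ le_rfl)

end Collage

namespace LaxExt

variable {V : Type u} [CompleteLattice V] [CommMonoid V] {F : Type u ⥤ Type u} (E : LaxExt V F)
  {X Y Z : Type u}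

lemma mul_le_of_comp_le {r : X → Y → V} {s : Y → Z → V} {q : X → Z → V}
    (h : ∀ x z, ⨆ y, r x y * s y z ≤ q x z) (t : F.obj X) (u : F.obj Y) (w : F.obj Z) :
    E.ext r t u * E.ext s u w ≤ E.ext q t w :=
  calc E.ext r t u * E.ext s u w
      ≤ ⨆ u', E.ext r t u' * E.ext s u' w := le_iSup (fun u' => E.ext r t u' * E.ext s u' w) u
    _ ≤ E.ext (fun x z => ⨆ y, r x y * s y z) t w := E.comp r s t w
    _ ≤ E.ext q t w := E.mono _ _ h t w

variable [IsQuantale V]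

lemma ext_comap_left (f : X → Y) (r : Y → Z → V) (t : F.obj X) (s : F.obj Z) :
    E.ext (fun x z => r (f x) z) t s = E.ext r (F.map (TypeCat.ofHom f) t) s := by
  apply le_antisymm
  · calc E.ext (fun x z => r (f x) z) t s
        ≤ E.ext (fun y x => fnGraph f x y) (F.map (TypeCat.ofHom f) t) t *
            E.ext (fun x z => r (f x) z) t s := le_mul_of_one_le_left' (E.lax_map_op f t)
      _ ≤ E.ext r (F.map (TypeCat.ofHom f) t) s :=
          E.mul_le_of_comp_le (fun _ _ => iSup_le fun _ => fnGraph_mul_le fun e => e ▸ le_rfl) _ _ _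
  · calc E.ext r (F.map (TypeCat.ofHom f) t) s
        ≤ E.ext (fnGraph f) t (F.map (TypeCat.ofHom f) t) * E.ext r (F.map (TypeCat.ofHom f) t) s :=
          le_mul_of_one_le_left' (E.lax_map f t)
      _ ≤ E.ext (fun x z => r (f x) z) t s :=
          E.mul_le_of_comp_le (fun _ _ => iSup_le fun _ => fnGraph_mul_le fun e => e ▸ le_rfl) _ _ _

lemma ext_comap_right (g : Y → Z) (r : X → Z → V) (t : F.obj X) (s : F.obj Y) :
    E.ext (fun x y => r x (g y)) t s = E.ext r t (F.map (TypeCat.ofHom g) s) := by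
  apply le_antisymm
  · calc E.ext (fun x y => r x (g y)) t s
        ≤ E.ext (fun x y => r x (g y)) t s * E.ext (fnGraph g) s (F.map (TypeCat.ofHom g) s) :=
          le_mul_of_one_le_right' (E.lax_map g s)
      _ ≤ E.ext r t (F.map (TypeCat.ofHom g) s) :=
          E.mul_le_of_comp_le (fun _ _ => iSup_le fun _ => mul_fnGraph_le fun e => e ▸ le_rfl) _ _ _
  · calc E.ext r t (F.map (TypeCat.ofHom g) s)
        ≤ E.ext r t (F.map (TypeCat.ofHom g) s) *
            E.ext (fun z y => fnGraph g y z) (F.map (TypeCat.ofHom g) s) s :=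
          le_mul_of_one_le_right' (E.lax_map_op g s)
      _ ≤ E.ext (fun x y => r x (g y)) t s :=
          E.mul_le_of_comp_le (fun _ _ => iSup_le fun _ => mul_fnGraph_le fun e => e ▸ le_rfl) _ _ _

/-- In the calculus of `V`-relations: `E (g° · r · f) = (F g)° · E r · F f`. -/
lemma ext_comap {X' Y' : Type u} (f : X → X') (g : Y → Y') (r : X' → Y' → V) (t : F.obj X)
    (s : F.obj Y) :
    E.ext (fun x y => r (f x) (g y)) t s =
      E.ext r (F.map (TypeCat.ofHom f) t) (F.map (TypeCat.ofHom g) s) := by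
  rw [E.ext_comap_right g (fun x y' => r (f x) y'), E.ext_comap_left]

end LaxExt

namespace Lifting

variable {V : Type u} [CompleteLattice V] [CommMonoid V] {F : Type u ⥤ Type u} (L : Lifting V F)

def PreservesInitial : Prop :=
  ∀ {X Y : Type u} (a : X → X → V) (b : Y → Y → V) (f : X → Y),
    IsVCat a → IsVCat b → IsInitialVFunctor a b f →
    IsInitialVFunctor (L.str a) (L.str b) (F.map (TypeCat.ofHom f))

def LocallyMonotone : Prop :=
  ∀ (X Y : Type u) (a : X → X → V) (b : Y → Y → V), IsVCat a → IsVCat b →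
    ∀ f g : X → Y, IsVFunctor a b f → IsVFunctor a b g →
    (∀ x, (1 : V) ≤ b (f x) (g x)) →
    ∀ t : F.obj X, (1 : V) ≤ L.str b (F.map (TypeCat.ofHom f) t) (F.map (TypeCat.ofHom g) t)

variable {X Y Z : Type u}

lemma str_map_le {a : X → X → V} {b : Y → Y → V} (ha : IsVCat a) (hb : IsVCat b) {f : X → Y}
    (hf : IsVFunctor a b f) {Z' : Type u} (u : Z → X) (v : Z' → X) (t : F.obj Z)
    (s : F.obj Z') :
    L.str a (F.map (TypeCat.ofHom u) t) (F.map (TypeCat.ofHom v) s) ≤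
      L.str b (F.map (TypeCat.ofHom fun z => f (u z)) t)
        (F.map (TypeCat.ofHom fun z => f (v z)) s) := by
  rw [← map_ofHom_map_ofHom_apply F u f, ← map_ofHom_map_ofHom_apply F v f]
  exact L.map a b f ha hb hf _ _

lemma str_map_eq (hI : L.PreservesInitial) {a : X → X → V} {b : Y → Y → V} (ha : IsVCat a)
    (hb : IsVCat b) {f : X → Y} (hf : IsInitialVFunctor a b f) {Z' : Type u} (u : Z → X)
    (v : Z' → X) (t : F.obj Z) (s : F.obj Z') :
    L.str a (F.map (TypeCat.ofHom u) t) (F.map (TypeCat.ofHom v) s) =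
      L.str b (F.map (TypeCat.ofHom fun z => f (u z)) t)
        (F.map (TypeCat.ofHom fun z => f (v z)) s) := by
  rw [← map_ofHom_map_ofHom_apply F u f, ← map_ofHom_map_ofHom_apply F v f]
  exact hI a b f ha hb hf _ _

def collageExt (r : X → Y → V) (t : F.obj X) (s : F.obj Y) : V :=
  L.str (discreteCollage r) (F.map (TypeCat.ofHom Sum.inl) t) (F.map (TypeCat.ofHom Sum.inr) s)

variable [IsQuantale V]

theorem preservesInitial_of_laxExt (E : LaxExt V F)
    (hE : ∀ (X : Type u) (a : X → X → V), IsVCat a → ∀ t s, E.ext a t s = L.str a t s) :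
    L.PreservesInitial := by
  intro X Y a b f ha hb hf t s
  have hab : a = fun x x' => b (f x) (f x') := funext₂ hf
  rw [← hE X a ha, ← hE Y b hb, ← E.ext_comap, ← hab]

theorem locallyMonotone_of_laxExt (E : LaxExt V F)
    (hE : ∀ (X : Type u) (a : X → X → V), IsVCat a → ∀ t s, E.ext a t s = L.str a t s) :
    L.LocallyMonotone := by
  intro X Y a b _ hb f g _ _ hfg t
  rw [← hE Y b hb, ← E.ext_comap]
  calc (1 : V) ≤ E.ext (fnGraph fun x => x) t t := by
        simpa only [map_ofHom_id_apply] using E.lax_map (fun x => x) t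
    _ ≤ E.ext (fun x x' => b (f x) (g x')) t t :=
        E.mono _ _ (fnGraph_le (r := fun x x' => b (f x) (g x')) hfg) t t

lemma collageExt_mono {r r' : X → Y → V} (h : ∀ x y, r x y ≤ r' x y) (t : F.obj X)
    (s : F.obj Y) : L.collageExt r t s ≤ L.collageExt r' t s := by
  have hid : IsVFunctor (discreteCollage r) (discreteCollage r') id := by
    rintro (x | y) (x' | y')
    exacts [le_rfl, h x y', le_rfl, le_rfl]
  exact L.str_map_le (isVCat_discreteCollage r) (isVCat_discreteCollage r') hid _ _ t s

lemma one_le_collageExt (hLM : L.LocallyMonotone) {r : X → Y → V} (u : Z → X) (v : Z → Y)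
    (h : ∀ z, 1 ≤ r (u z) (v z)) (t : F.obj Z) :
    1 ≤ L.collageExt r (F.map (TypeCat.ofHom u) t) (F.map (TypeCat.ofHom v) t) := by
  have hc := isVCat_discreteCollage r
  rw [collageExt, map_ofHom_map_ofHom_apply, map_ofHom_map_ofHom_apply]
  exact hLM Z _ _ _ isVCat_fnGraph_id hc (fun z => .inl (u z)) (fun z => .inr (v z))
    (isVFunctor_fnGraph_id hc.1 _) (isVFunctor_fnGraph_id hc.1 _) h t

lemma collageExt_mul_le (hI : L.PreservesInitial) (r : X → Y → V) (s : Y → Z → V)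
    (t : F.obj X) (u : F.obj Y) (w : F.obj Z) :
    L.collageExt r t u * L.collageExt s u w ≤
      L.collageExt (fun x z => ⨆ y, r x y * s y z) t w := by
  let M := collage (discreteCollage r) (fnGraph id) (Sum.elim (fun x z => ⨆ y, r x y * s y z) s)
  have hM : IsVCat M := by
    refine isVCat_collage (isVCat_discreteCollage r) isVCat_fnGraph_id ?_
      (fun _ _ _ => mul_fnGraph_le fun e => e ▸ le_rfl)
    rintro (x | y) (x' | y') z
    exacts [fnGraph_mul_le fun e => e ▸ le_rfl, le_iSup (fun y => r x y * s y z) y',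
      Quantale.bot_mul.trans_le bot_le, fnGraph_mul_le fun e => e ▸ le_rfl]
  have hr : IsInitialVFunctor (discreteCollage r) M Sum.inl := fun _ _ => rfl
  have hs : IsInitialVFunctor (discreteCollage s) M (Sum.map Sum.inr id) := by
    rintro (_ | _) (_ | _) <;> rfl
  have hrs : IsInitialVFunctor (discreteCollage fun x z => ⨆ y, r x y * s y z) M
      (Sum.map Sum.inl id) := by
    rintro (_ | _) (_ | _) <;> rfl
  rw [collageExt, collageExt, collageExt,
    L.str_map_eq hI (isVCat_discreteCollage _) hM hr,
    L.str_map_eq hI (isVCat_discreteCollage _) hM hs,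
    L.str_map_eq hI (isVCat_discreteCollage _) hM hrs]
  exact (L.isVCat M hM).2 _ _ _

lemma collageExt_eq_str (hI : L.PreservesInitial) (hLM : L.LocallyMonotone) {a : X → X → V}
    (ha : IsVCat a) (t s : F.obj X) : L.collageExt a t s = L.str a t s := by
  apply le_antisymm
  · have hfold : IsVFunctor (discreteCollage a) a (Sum.elim id id) := by
      rintro (x | x) (y | y)
      exacts [fnGraph_le ha.1 x y, le_rfl, bot_le, fnGraph_le ha.1 x y]
    simpa only [collageExt, Sum.elim_inl, Sum.elim_inr, id_eq, map_ofHom_id_apply] using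
      L.str_map_le (isVCat_discreteCollage a) ha hfold Sum.inl Sum.inr t s
  -- three copies of `X`: discrete, `a`, discrete; the outer two span the collage of `a`
  let M := collage (collage (fnGraph id) a a) (fnGraph id) (Sum.elim a a)
  have hM : IsVCat M := by
    refine isVCat_collage (isVCat_collage isVCat_fnGraph_id ha
      (fun _ _ _ => fnGraph_mul_le fun e => e ▸ le_rfl) fun _ _ _ => ha.2 _ _ _)
      isVCat_fnGraph_id ?_ fun _ _ _ => mul_fnGraph_le fun e => e ▸ le_rfl
    rintro (x | x) (x' | x') z
    exacts [fnGraph_mul_le fun e => e ▸ le_rfl, ha.2 _ _ _, Quantale.bot_mul.trans_le bot_le,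
      ha.2 _ _ _]
  have hmid : IsInitialVFunctor a M fun x => .inl (.inr x) := fun _ _ => rfl
  have hout : IsInitialVFunctor (discreteCollage a) M (Sum.map Sum.inl id) := by
    rintro (_ | _) (_ | _) <;> rfl
  have hleft (t : F.obj X) := hLM X _ _ _ isVCat_fnGraph_id hM (fun x => .inl (.inl x))
    (fun x => .inl (.inr x)) (isVFunctor_fnGraph_id hM.1 _) (isVFunctor_fnGraph_id hM.1 _)
    ha.1 t
  have hright (t : F.obj X) := hLM X _ _ _ isVCat_fnGraph_id hM (fun x => .inl (.inr x))
    (fun x => .inr x) (isVFunctor_fnGraph_id hM.1 _) (isVFunctor_fnGraph_id hM.1 _)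
    ha.1 t
  rw [hI a M _ ha hM hmid, collageExt, L.str_map_eq hI (isVCat_discreteCollage a) hM hout]
  exact (L.isVCat M hM).le_of_one_le (hleft t) (hright s)

def toLaxExt (hI : L.PreservesInitial) (hLM : L.LocallyMonotone) : LaxExt V F where
  ext := L.collageExt
  mono _ _ h := L.collageExt_mono h
  comp r s t w := iSup_le fun u => L.collageExt_mul_le hI r s t u w
  lax_map f t := by
    simpa only [map_ofHom_id_apply] using
      L.one_le_collageExt hLM (fun x => x) f (one_le_fnGraph_apply f) t
  lax_map_op f t := by
    simpa only [map_ofHom_id_apply] using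
      L.one_le_collageExt hLM (r := fun y x => fnGraph f x y) f (fun x => x)
        (one_le_fnGraph_apply f) t

end Lifting

/-- a lifting is induced by a lax extension iff it preserves initial
morphisms and is locally monotone. -/
theorem stmt_14 {V : Type u} [CompleteLattice V] [CommMonoid V] (hV : QuantaleLaw V)
    {F : Type u ⥤ Type u} (L : Lifting V F) :
    (∃ E : LaxExt V F, ∀ (X : Type u) (a : X → X → V), IsVCat a →
        ∀ t s : F.obj X, E.ext a t s = L.str a t s) ↔
    ((∀ {X Y : Type u} (a : X → X → V) (b : Y → Y → V) (f : X → Y),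
        IsVCat a → IsVCat b → IsInitialVFunctor a b f →
        IsInitialVFunctor (L.str a) (L.str b) (F.map (TypeCat.ofHom f))) ∧
     (∀ (X Y : Type u) (a : X → X → V) (b : Y → Y → V), IsVCat a → IsVCat b →
        ∀ f g : X → Y, IsVFunctor a b f → IsVFunctor a b g →
        (∀ x, (1 : V) ≤ b (f x) (g x)) →
        ∀ t : F.obj X, (1 : V) ≤ L.str b (F.map (TypeCat.ofHom f) t) (F.map (TypeCat.ofHom g) t))) := by
  have := hV.isQuantale
  constructor
  · rintro ⟨E, hE⟩
    exact ⟨L.preservesInitial_of_laxExt E hE, L.locallyMonotone_of_laxExt E hE⟩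
  · rintro ⟨hI, hLM⟩
    exact ⟨L.toLaxExt hI hLM, fun X a ha => L.collageExt_eq_str hI hLM ha⟩
end
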